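/- In any LTS S with maximal self-ASR R_max, if (p, q) ∈ R_max and for some action u the state x' has transitions (x', u, p) and (x', u, q) in δ with (q, p) ∉ R_max, then deleting the single transition (x', u, q) yields an LTS S' with S' ≃_AS S. -/
import Mathlib


/-- A labelled transition system with states `X`, inputs `U`, outputs `Y`. -/
structure LTS (X U Y : Type) where
  init : Set X
  tr : Set (X × U × X)
  out : X → Y

namespace LTS

variable {X U Y Xa Xb Xc : Type}

/-- The set of `u`-successors of `x`. -/
def Post (S : LTS X U Y) (x : X) (u : U) : Set X := {x' | (x, u, x') ∈ S.tr}

/-- The set of inputs enabled at `x`. -/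
def Enabled (S : LTS X U Y) (x : X) : Set U := {u | ∃ x', (x, u, x') ∈ S.tr}

/-- `R` is an alternating simulation relation from `Sa` to `Sb`. -/
def IsASR (Sa : LTS Xa U Y) (Sb : LTS Xb U Y) (R : Set (Xa × Xb)) : Prop :=
  (∀ xb ∈ Sb.init, ∃ xa ∈ Sa.init, (xa, xb) ∈ R) ∧
  (∀ xa xb, (xa, xb) ∈ R → Sa.out xa = Sb.out xb) ∧
  (∀ xa xb, (xa, xb) ∈ R → ∀ ua ∈ Sa.Enabled xa,
    ∃ ub ∈ Sb.Enabled xb, ∀ xb' ∈ Sb.Post xb ub,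
      ∃ xa' ∈ Sa.Post xa ua, (xa', xb') ∈ R)

/-- Alternating simulation equivalence. -/
def ASE (Sa : LTS Xa U Y) (Sb : LTS Xb U Y) : Prop :=
  (∃ R, Sa.IsASR Sb R) ∧ (∃ R', Sb.IsASR Sa R')

/-- The union of all alternating simulation relations from `Sa` to `Sb`. -/
def MaxASR (Sa : LTS Xa U Y) (Sb : LTS Xb U Y) : Set (Xa × Xb) :=
  {p | ∃ R, Sa.IsASR Sb R ∧ p ∈ R}

/-- `S` reinitialized at the single state `x`. -/
def withInit (S : LTS X U Y) (x : X) : LTS X U Y := { S with init := {x} }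

end LTS

section Aux

variable {X U Y Xa Xb Xc : Type}

lemma id_isASR (S : LTS X U Y) : S.IsASR S {r | r.1 = r.2} := by
  refine ⟨fun xb hb => ⟨xb, hb, rfl⟩, fun xa xb h => by cases h; rfl, ?_⟩
  intro xa xb h ua hua
  cases h
  exact ⟨ua, hua, fun xb' hb' => ⟨xb', hb', rfl⟩⟩

lemma diag_mem_max (S : LTS X U Y) (x : X) : (x, x) ∈ S.MaxASR S :=
  ⟨_, id_isASR S, rfl⟩

lemma max_isASR (S : LTS X U Y) : S.IsASR S (S.MaxASR S) := by
  refine ⟨fun xb hb => ⟨xb, hb, diag_mem_max S xb⟩, ?_, ?_⟩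
  · rintro xa xb ⟨R, hR, hmem⟩
    exact hR.2.1 xa xb hmem
  · rintro xa xb ⟨R, hR, hmem⟩ ua hua
    obtain ⟨ub, hub, hpost⟩ := hR.2.2 xa xb hmem ua hua
    exact ⟨ub, hub, fun xb' hb' => by
      obtain ⟨xa', ha', hr⟩ := hpost xb' hb'
      exact ⟨xa', ha', R, hR, hr⟩⟩

lemma comp_isASR {Sa : LTS Xa U Y} {Sb : LTS Xb U Y} {Sc : LTS Xc U Y}
    {R1 : Set (Xa × Xb)} {R2 : Set (Xb × Xc)}
    (h1 : Sa.IsASR Sb R1) (h2 : Sb.IsASR Sc R2) :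
    Sa.IsASR Sc {r | ∃ xb, (r.1, xb) ∈ R1 ∧ (xb, r.2) ∈ R2} := by
  refine ⟨?_, ?_, ?_⟩
  · intro xc hc
    obtain ⟨xb, hb, hr2⟩ := h2.1 xc hc
    obtain ⟨xa, ha, hr1⟩ := h1.1 xb hb
    exact ⟨xa, ha, xb, hr1, hr2⟩
  · rintro xa xc ⟨xb, hr1, hr2⟩
    exact (h1.2.1 xa xb hr1).trans (h2.2.1 xb xc hr2)
  · rintro xa xc ⟨xb, hr1, hr2⟩ ua hua
    obtain ⟨ub, hub, hp1⟩ := h1.2.2 xa xb hr1 ua hua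
    obtain ⟨uc, huc, hp2⟩ := h2.2.2 xb xc hr2 ub hub
    refine ⟨uc, huc, fun xc' hc' => ?_⟩
    obtain ⟨xb', hb', hr2'⟩ := hp2 xc' hc'
    obtain ⟨xa', ha', hr1'⟩ := hp1 xb' hb'
    exact ⟨xa', ha', xb', hr1', hr2'⟩

lemma max_trans {S : LTS X U Y} {a b c : X}
    (h1 : (a, b) ∈ S.MaxASR S) (h2 : (b, c) ∈ S.MaxASR S) :
    (a, c) ∈ S.MaxASR S :=
  ⟨_, comp_isASR (max_isASR S) (max_isASR S), b, h1, h2⟩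

end Aux

theorem remove_single_younger_sibling {X U Y : Type} (S : LTS X U Y)
    (p q x' : X) (u : U)
    (hpq : (p, q) ∈ S.MaxASR S) (hqp : (q, p) ∉ S.MaxASR S)
    (h1 : (x', u, p) ∈ S.tr) (h2 : (x', u, q) ∈ S.tr) :
    LTS.ASE { S with tr := S.tr \ {(x', u, q)} } S := by
  have hpne : p ≠ q := by
    rintro rfl; exact hqp hpq
  set S' : LTS X U Y := { S with tr := S.tr \ {(x', u, q)} } with hS'
  have h1' : (x', u, p) ∈ S'.tr := ⟨h1, by simp [hpne]⟩
  constructor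
  · -- S' ⪯ S via MaxASR
    refine ⟨S.MaxASR S, ?_, ?_, ?_⟩
    · intro xb hb; exact ⟨xb, hb, diag_mem_max S xb⟩
    · intro xa xb h; exact (max_isASR S).2.1 xa xb h
    · rintro xa xb h ua ⟨xa0, hxa0, _⟩
      obtain ⟨ub, hub, hpost⟩ := (max_isASR S).2.2 xa xb h ua ⟨xa0, hxa0⟩
      refine ⟨ub, hub, fun xb' hb' => ?_⟩
      obtain ⟨xa', ha', hr⟩ := hpost xb' hb'
      by_cases hd : (xa, ua, xa') = (x', u, q)
      · -- replace q by p
        obtain ⟨rfl, rfl, rfl⟩ : xa = x' ∧ ua = u ∧ xa' = q := by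
          simpa [Prod.ext_iff] using hd
        exact ⟨p, h1', max_trans hpq hr⟩
      · exact ⟨xa', ⟨ha', hd⟩, hr⟩
  · -- S ⪯ S' via identity
    refine ⟨{r | r.1 = r.2}, ?_, ?_, ?_⟩
    · intro xb hb; exact ⟨xb, hb, rfl⟩
    · intro xa xb h; cases h; rfl
    · rintro xa xb h ua ⟨xa0, hxa0⟩
      cases h
      by_cases hd : xa = x' ∧ ua = u
      · exact ⟨ua, ⟨p, hd.1 ▸ hd.2 ▸ h1'⟩, fun xb' hb' => ⟨xb', hb'.1, rfl⟩⟩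
      · refine ⟨ua, ⟨xa0, hxa0, ?_⟩, fun xb' hb' => ⟨xb', hb'.1, rfl⟩⟩
        intro hmem
        apply hd
        have := Prod.ext_iff.1 hmem
        exact ⟨this.1, (Prod.ext_iff.1 this.2).1⟩
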